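/- arXiv:1709.04721 — 3 statements merged into one kernel-verified Lean document; each statement's English description precedes it below -/
import Mathlib

section
/- Let N ≥ 2 be an even integer. Then the identity is the only based automorphism of the fusion ring R_N; that is, every ring automorphism of R_N whose underlying ℤ-linear map permutes the basis {b_0, b_1, …, b_{N−1}} is the identity map. (The A_N fusion ring has no non-trivial automorphisms when N is even.) -/
/-!
A based automorphism `f` permutes the basis by some `π`, and since all structure constants are
`0` or `1`, `π` carries the support of `b_j b_k` onto that of `b_{π j} b_{π k}`. The basis
elements occurring in some square `b_k²` are exactly the `b_m` with `m` even, so `π` preserves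
parity; and `b_j²` has `min j (N-1-j) + 1` summands, so `π j ∈ {j, N-1-j}`. When `N` is even,
`j` and `N-1-j` have different parities, forcing `π j = j`.
-/

open Finset

theorem Module.Basis.finset_sum_injective {ι R M : Type*} [Ring R] [Nontrivial R]
    [AddCommGroup M] [Module R M] (b : Module.Basis ι R M) :
    Function.Injective fun s : Finset ι => ∑ i ∈ s, b i := by
  classical
  intro s t h
  ext x
  have hx := congrArg (fun y => b.repr y x) h
  simp only [map_sum, Module.Basis.repr_self, Finsupp.finsetSum_apply, Finsupp.single_apply,
    sum_ite_eq'] at hx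
  by_cases hs : x ∈ s <;> by_cases ht : x ∈ t <;> simp_all

section SupportPermutation

variable {ι : Type*} {S : ι → ι → Finset ι} {π : ι ≃ ι}

theorem map_support_eq_of_map_basis_eq {R : Type*} [Ring R] (B : Module.Basis ι ℤ R)
    (hmul : ∀ j k, B j * B k = ∑ m ∈ S j k, B m) (f : R →+* R) (hf : ∀ i, f (B i) = B (π i))
    (j k : ι) : (S j k).map π.toEmbedding = S (π j) (π k) :=
  B.finset_sum_injective <| calc
    ∑ m ∈ (S j k).map π.toEmbedding, B m = f (B j * B k) := by
      simp [hmul, hf]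
    _ = ∑ m ∈ S (π j) (π k), B m := by rw [map_mul, hf, hf, hmul]

theorem exists_mem_diag_apply_iff (hS : ∀ j k, (S j k).map π.toEmbedding = S (π j) (π k))
    (m : ι) : (∃ k, π m ∈ S k k) ↔ ∃ k, m ∈ S k k := by
  rw [← π.exists_congr_right]
  simp only [← hS, mem_map_equiv, Equiv.symm_apply_apply]

theorem card_diag_apply (hS : ∀ j k, (S j k).map π.toEmbedding = S (π j) (π k)) (j : ι) :
    #(S (π j) (π j)) = #(S j j) := by
  rw [← hS, card_map]

end SupportPermutation

namespace AFusion

def support (N : ℕ) (j k : Fin N) : Finset (Fin N) :=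
  Finset.univ.filter (fun m : Fin N =>
    m.val % 2 = (j.val + k.val) % 2 ∧
    j.val - k.val ≤ m.val ∧ k.val - j.val ≤ m.val ∧
    m.val ≤ j.val + k.val ∧ m.val ≤ 2 * (N - 1) - (j.val + k.val))

theorem exists_mem_support_self_iff {N : ℕ} (m : Fin N) :
    (∃ k, m ∈ support N k k) ↔ Even m.val := by
  simp only [support, mem_filter, mem_univ, true_and, Nat.even_iff]
  constructor
  · rintro ⟨k, hk⟩
    omega
  · intro hm
    exact ⟨⟨m / 2, by omega⟩, by simp only; omega⟩

-- `b_j²` is the sum of `b_0, b_2, …, b_{2 min j (N-1-j)}`.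
theorem card_support_self {N : ℕ} (j : Fin N) :
    #(support N j j) = min j.val (N - 1 - j.val) + 1 := by
  have hval : (support N j j).map Fin.valEmbedding =
      (range (min j.val (N - 1 - j.val) + 1)).map
        ⟨(2 * ·), mul_right_injective₀ two_ne_zero⟩ := by
    ext m
    simp only [support, mem_map, mem_filter, mem_univ, true_and, mem_range,
      Fin.valEmbedding_apply, Function.Embedding.coeFn_mk]
    constructor
    · rintro ⟨m, hm, rfl⟩
      exact ⟨m / 2, by omega, by omega⟩
    · rintro ⟨i, hi, rfl⟩
      exact ⟨⟨2 * i, by omega⟩, by simp only; omega, rfl⟩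
  rw [← card_map Fin.valEmbedding, hval, card_map, card_range]

theorem eq_of_mod_two_eq_of_min_eq {N j j' : ℕ} (hN : Even N) (hj : j < N) (hj' : j' < N)
    (hpar : j % 2 = j' % 2) (hmin : min j (N - 1 - j) = min j' (N - 1 - j')) : j = j' := by
  obtain ⟨r, rfl⟩ := hN
  omega

end AFusion

open AFusion in
/-- Let `N ≥ 2` be an even integer.  Let `R` be (a realization of) the
fusion ring `R_N` of the `A_N` fusion categories: a commutative ring which is free as a
`ℤ`-module with basis `b_0, …, b_{N-1}`, where `b_0 = 1` and
`b_j · b_k = Σ b_m` over all `m` with `m ≡ j + k (mod 2)` and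
`|j − k| ≤ m ≤ min (j + k) (2(N−1) − j − k)`.
Then the identity is the only based automorphism of `R_N`: every ring automorphism of `R`
whose underlying `ℤ`-linear map permutes the basis `{b_0, …, b_{N-1}}` is the identity. -/
theorem aN_fusion_ring_no_nontrivial_based_automorphism_of_even
    {N : ℕ} (hNeven : Even N)
    {R : Type*} [CommRing R] (B : Module.Basis (Fin N) ℤ R)
    (hmul : ∀ j k : Fin N, B j * B k =
      ∑ m ∈ Finset.univ.filter (fun m : Fin N =>
        m.val % 2 = (j.val + k.val) % 2 ∧
        j.val - k.val ≤ m.val ∧ k.val - j.val ≤ m.val ∧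
        m.val ≤ j.val + k.val ∧ m.val ≤ 2 * (N - 1) - (j.val + k.val)), B m)
    (f : R ≃+* R) (π : Equiv.Perm (Fin N))
    (hf : ∀ i : Fin N, f (B i) = B (π i)) :
    f = RingEquiv.refl R := by
  have hS := map_support_eq_of_map_basis_eq (S := support N) B hmul f hf
  have hπ (j : Fin N) : π j = j := by
    have hpar : Even (π j).val ↔ Even j.val := by
      rw [← exists_mem_support_self_iff, ← exists_mem_support_self_iff,
        exists_mem_diag_apply_iff hS]
    rw [Nat.even_iff, Nat.even_iff] at hpar
    have hcard := card_diag_apply hS j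
    rw [card_support_self, card_support_self] at hcard
    exact Fin.ext <| eq_of_mod_two_eq_of_min_eq hNeven (π j).isLt j.isLt
      (by omega) (by omega)
  have hlin : (f : R →+* R).toAddMonoidHom.toIntLinearMap = LinearMap.id :=
    B.ext fun i => by simp [hf, hπ]
  exact RingEquiv.ext fun x => LinearMap.congr_fun hlin x
end

section
/- Let N ≥ 5 be an odd integer. The ℤ-linear map σ : R_N → R_N defined on the basis by σ(b_n) = b_n for n even and σ(b_n) = b_{N−1−n} for n odd is a based automorphism of R_N different from the identity, and every based automorphism of R_N equals either the identity or σ; in particular, the group of based automorphisms of R_N has order exactly 2. -/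
/-!
Let `σ` fix the even indices and send an odd `n` to `N - 1 - n`. Because `N` is odd, `σ`
preserves parity, and checking the inequalities directly shows that `σ` carries the indices
in `b_j b_k` onto those in `b_{σ j} b_{σ k}`. So `σ` induces a based automorphism.

Conversely, the image of `b₁` determines a based automorphism: `b₀ = 1`, and the rule
`b₁ b_{k+1} = b_k + b_{k+2}` gives each later `b_k` by recursion. If `b₁` is sent to `b_a`, then
`b_a²` is a sum of two basis elements, as `b₁² = b₀ + b₂` is. But `b_a²` is the sum of the `b_m`
with `m` even and `m ≤ 2 min(a, N - 1 - a)`. Hence `a = 1` or `a = N - 2`, which correspond to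
the identity and to `σ`.
-/

namespace Module.Basis

variable {ι R : Type*}

theorem finset_sum_injective_s1 {S M : Type*} [Semiring S] [Nontrivial S] [AddCommMonoid M]
    [Module S M] (B : Basis ι S M) :
    Function.Injective fun s : Finset ι => ∑ i ∈ s, B i := by
  classical
  intro s t h
  ext i
  have hi := congrArg (fun x => B.repr x i) h
  simp only [map_sum, repr_self, Finsupp.finsetSum_apply, Finsupp.single_apply,
    Finset.sum_ite_eq'] at hi
  by_cases hs : i ∈ s <;> by_cases ht : i ∈ t <;> simp_all

theorem ringEquiv_ext {S : Type*} [Ring R] [Ring S] (B : Basis ι ℤ R) {f g : R ≃+* S}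
    (h : ∀ i, f (B i) = g (B i)) : f = g :=
  RingEquiv.ext fun x => LinearMap.congr_fun
    (B.ext (f₁ := f.toAddMonoidHom.toIntLinearMap) (f₂ := g.toAddMonoidHom.toIntLinearMap) h) x

theorem map_mul_of_map_mul_basis {S : Type*} [Ring R] [Ring S] (B : Basis ι ℤ R)
    (e : R →ₗ[ℤ] S) (h : ∀ j k, e (B j * B k) = e (B j) * e (B k)) (x y : R) :
    e (x * y) = e x * e y :=
  LinearMap.congr_fun₂
    (LinearMap.ext_basis B B (B := (LinearMap.mul ℤ R).compr₂ e)
      (B' := (LinearMap.mul ℤ S).compl₁₂ e e) h) x y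

noncomputable def ringEquivOfPerm [Ring R] (B : Basis ι ℤ R) (p : Equiv.Perm ι)
    (h : ∀ j k, B.equiv B p (B j * B k) = B (p j) * B (p k)) : R ≃+* R :=
  { B.equiv B p with
    map_mul' :=
      B.map_mul_of_map_mul_basis (B.equiv B p).toLinearMap fun j k => by simpa using h j k }

theorem ringEquivOfPerm_apply [Ring R] (B : Basis ι ℤ R) (p : Equiv.Perm ι)
    (h : ∀ j k, B.equiv B p (B j * B k) = B (p j) * B (p k)) (i : ι) :
    B.ringEquivOfPerm p h (B i) = B (p i) :=
  B.equiv_apply i B p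

theorem perm_apply_eq_self_of_eq_one [Ring R] (B : Basis ι ℤ R) {f : R ≃+* R}
    {π : Equiv.Perm ι} (hf : ∀ i, f (B i) = B (π i)) {i₀ : ι} (h : B i₀ = 1) : π i₀ = i₀ :=
  B.injective (by rw [← hf, h, map_one])

end Module.Basis

namespace AFusionRing

def support (N : ℕ) (j k : Fin N) : Finset (Fin N) :=
  Finset.univ.filter fun m : Fin N =>
    m.val % 2 = (j.val + k.val) % 2 ∧
    j.val - k.val ≤ m.val ∧ k.val - j.val ≤ m.val ∧
    m.val ≤ j.val + k.val ∧ m.val ≤ 2 * (N - 1) - (j.val + k.val)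

def IsFusionBasis {N : ℕ} {R : Type*} [CommRing R] (B : Module.Basis (Fin N) ℤ R) : Prop :=
  ∀ j k, B j * B k = ∑ m ∈ support N j k, B m

variable {N : ℕ}

theorem support_one {a : ℕ} (ha : a + 2 < N) :
    support N ⟨1, by omega⟩ ⟨a + 1, by omega⟩ = {⟨a, by omega⟩, ⟨a + 2, ha⟩} := by
  ext m
  simp only [support, Finset.mem_filter, Finset.mem_univ, true_and, Finset.mem_insert,
    Finset.mem_singleton, Fin.ext_iff]
  omega

theorem eq_one_or_eq_sub_two_of_card_support_self {a : Fin N} (h : (support N a a).card = 2) :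
    a.val = 1 ∨ a.val = N - 2 := by
  by_contra! hne
  by_cases hmid : 2 ≤ a.val ∧ a.val + 3 ≤ N
  · have hsub : {⟨0, by omega⟩, ⟨2, by omega⟩, ⟨4, by omega⟩} ⊆ support N a a := by
      intro m hm
      simp only [support, Finset.mem_filter, Finset.mem_univ, true_and, Finset.mem_insert,
        Finset.mem_singleton, Fin.ext_iff] at hm ⊢
      omega
    have := Finset.card_le_card hsub
    rw [Finset.card_eq_three.mpr ⟨_, _, _, by simp, by simp, by simp, rfl⟩] at this
    omega
  · have hsub : support N a a ⊆ {⟨0, by omega⟩} := by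
      intro m hm
      simp only [support, Finset.mem_filter, Finset.mem_univ, true_and,
        Finset.mem_singleton, Fin.ext_iff] at hm ⊢
      omega
    have := Finset.card_le_card hsub
    rw [Finset.card_singleton] at this
    omega

def oddReflection (hN : Odd N) : Equiv.Perm (Fin N) :=
  Function.Involutive.toPerm (fun n => if n.val % 2 = 0 then n else n.rev) fun n => by
    have := Nat.odd_iff.mp hN
    ext
    dsimp only
    split_ifs <;> simp only [Fin.val_rev] at * <;> omega

theorem oddReflection_val (hN : Odd N) (n : Fin N) :
    (oddReflection hN n).val = if n.val % 2 = 0 then n.val else N - 1 - n.val := by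
  change (if n.val % 2 = 0 then n else n.rev).val = _
  split_ifs
  · rfl
  · rw [Fin.val_rev]
    omega

theorem oddReflection_involutive (hN : Odd N) : Function.Involutive (oddReflection hN) :=
  Function.Involutive.toPerm_involutive _

theorem oddReflection_mem_support (hN : Odd N) {j k m : Fin N} (hm : m ∈ support N j k) :
    oddReflection hN m ∈ support N (oddReflection hN j) (oddReflection hN k) := by
  have := Nat.odd_iff.mp hN
  simp only [support, Finset.mem_filter, Finset.mem_univ, true_and] at hm ⊢
  simp only [oddReflection_val]
  split_ifs <;> omega

theorem oddReflection_mem_support_iff (hN : Odd N) {j k m : Fin N} :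
    oddReflection hN m ∈ support N (oddReflection hN j) (oddReflection hN k) ↔
      m ∈ support N j k := by
  refine ⟨fun h => ?_, oddReflection_mem_support hN⟩
  simpa only [oddReflection_involutive hN _] using oddReflection_mem_support hN h

namespace IsFusionBasis

variable {R : Type*} [CommRing R] {B : Module.Basis (Fin N) ℤ R}

theorem basis_one_mul (hB : IsFusionBasis B) {a : ℕ} (ha : a + 2 < N) :
    B ⟨1, by omega⟩ * B ⟨a + 1, by omega⟩ = B ⟨a, by omega⟩ + B ⟨a + 2, ha⟩ := by
  rw [hB, support_one ha, Finset.sum_pair (by simp)]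

theorem equiv_oddReflection_mul (hB : IsFusionBasis B) (hN : Odd N) (j k : Fin N) :
    B.equiv B (oddReflection hN) (B j * B k) =
      B (oddReflection hN j) * B (oddReflection hN k) := by
  rw [hB, hB, map_sum]
  exact Finset.sum_equiv (oddReflection hN) (fun m => (oddReflection_mem_support_iff hN).symm)
    fun m _ => B.equiv_apply m B _

theorem perm_apply_one (hB : IsFusionBasis B) (hN : 4 < N) (hone : B ⟨0, by omega⟩ = 1)
    {f : R ≃+* R} {π : Equiv.Perm (Fin N)} (hf : ∀ i, f (B i) = B (π i)) :
    (π ⟨1, by omega⟩).val = 1 ∨ (π ⟨1, by omega⟩).val = N - 2 := by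
  have hπ0 := B.perm_apply_eq_self_of_eq_one hf hone
  have hne : (⟨0, by omega⟩ : Fin N) ≠ π ⟨2, by omega⟩ := fun h => by
    rw [← hπ0] at h
    exact absurd (congrArg Fin.val (π.injective h)) (by norm_num)
  have hsq : B ⟨1, by omega⟩ * B ⟨1, by omega⟩ = B ⟨0, by omega⟩ + B ⟨2, by omega⟩ :=
    hB.basis_one_mul (a := 0) (by omega)
  have hsum : ∑ m ∈ support N (π ⟨1, by omega⟩) (π ⟨1, by omega⟩), B m =
      ∑ m ∈ {⟨0, by omega⟩, π ⟨2, by omega⟩}, B m := by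
    rw [← hB, ← hf, ← map_mul, hsq, map_add, hf, hf, hπ0, Finset.sum_pair hne]
  apply eq_one_or_eq_sub_two_of_card_support_self
  rw [B.finset_sum_injective_s1 hsum, Finset.card_pair hne]

theorem ringEquiv_eq_of_perm_apply_one (hB : IsFusionBasis B) (hN : 2 ≤ N)
    (hone : B ⟨0, by omega⟩ = 1) {f g : R ≃+* R} {π τ : Equiv.Perm (Fin N)}
    (hf : ∀ i, f (B i) = B (π i)) (hg : ∀ i, g (B i) = B (τ i))
    (h1 : π ⟨1, by omega⟩ = τ ⟨1, by omega⟩) : f = g := by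
  suffices ∀ k (hk : k < N), π ⟨k, hk⟩ = τ ⟨k, hk⟩ from
    B.ringEquiv_ext fun i => by rw [hf, hg, this i.1 i.2]
  intro k
  induction k using Nat.strong_induction_on with
  | _ k ih =>
    intro hk
    match k with
    | 0 => rw [B.perm_apply_eq_self_of_eq_one hf hone, B.perm_apply_eq_self_of_eq_one hg hone]
    | 1 => exact h1
    | k + 2 =>
      have hrule := hB.basis_one_mul hk
      have hπ := congrArg f hrule
      have hτ := congrArg g hrule
      rw [map_mul, map_add, hf, hf, hf, hf, h1, ih (k + 1) (by omega), ih k (by omega)] at hπ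
      rw [map_mul, map_add, hg, hg, hg, hg] at hτ
      exact B.injective (add_left_cancel (hπ.symm.trans hτ))

end IsFusionBasis

end AFusionRing

/-- Let `N ≥ 5` be an odd integer, and let `R` be (a realization of) the
fusion ring `R_N` of the `A_N` fusion categories, with `ℤ`-basis `b_0, …, b_{N-1}`,
`b_0 = 1`, and the `A_N` fusion rules.  The `ℤ`-linear map `σ` with `σ(b_n) = b_n` for
`n` even and `σ(b_n) = b_{N−1−n}` for `n` odd is a based ring automorphism of `R_N`
different from the identity, and every based automorphism of `R_N` is either the identity
or `σ`; in particular the group of based automorphisms of `R_N` has order exactly `2`. -/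
theorem aN_fusion_ring_based_automorphism_group_of_odd
    {N : ℕ} (hN : 5 ≤ N) (hNodd : Odd N)
    {R : Type*} [CommRing R] (B : Module.Basis (Fin N) ℤ R)
    (hone : B ⟨0, by omega⟩ = 1)
    (hmul : ∀ j k : Fin N, B j * B k =
      ∑ m ∈ Finset.univ.filter (fun m : Fin N =>
        m.val % 2 = (j.val + k.val) % 2 ∧
        j.val - k.val ≤ m.val ∧ k.val - j.val ≤ m.val ∧
        m.val ≤ j.val + k.val ∧ m.val ≤ 2 * (N - 1) - (j.val + k.val)), B m) :
    ∃ σ : R ≃+* R,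
      (∀ n : Fin N, σ (B n) =
        if n.val % 2 = 0 then B n else B ⟨N - 1 - n.val, by omega⟩) ∧
      (∃ π : Equiv.Perm (Fin N), ∀ i : Fin N, σ (B i) = B (π i)) ∧
      σ ≠ RingEquiv.refl R ∧
      (∀ f : R ≃+* R,
        (∃ π : Equiv.Perm (Fin N), ∀ i : Fin N, f (B i) = B (π i)) →
        f = RingEquiv.refl R ∨ f = σ) := by
  have hB : AFusionRing.IsFusionBasis B := hmul
  let p := AFusionRing.oddReflection hNodd
  let σ := B.ringEquivOfPerm p (hB.equiv_oddReflection_mul hNodd)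
  have hσ : ∀ i, σ (B i) = B (p i) := B.ringEquivOfPerm_apply _ _
  have hp1 : (p ⟨1, by omega⟩).val = N - 2 := by
    rw [AFusionRing.oddReflection_val, Fin.val_mk, if_neg (by decide)]
    omega
  refine ⟨σ, fun n => ?_, ⟨p, hσ⟩, fun hσ1 => ?_, fun f ⟨π, hf⟩ => ?_⟩
  · rw [hσ]
    split_ifs with h <;> congr 1 <;> ext <;> simp only [p, AFusionRing.oddReflection_val, h] <;> rfl
  · have h := hσ ⟨1, by omega⟩
    rw [hσ1] at h
    have h1 : 1 = (p ⟨1, by omega⟩).val := congrArg Fin.val (B.injective h)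
    omega
  · have hrefl : ∀ i, RingEquiv.refl R (B i) = B (Equiv.refl _ i) := fun _ => rfl
    rcases hB.perm_apply_one hN hone hf with h1 | h1
    · exact .inl (hB.ringEquiv_eq_of_perm_apply_one (by omega) hone hf hrefl (Fin.ext h1))
    · exact .inr (hB.ringEquiv_eq_of_perm_apply_one (by omega) hone hf hσ
        (Fin.ext (h1.trans hp1.symm)))
end

section
/- In the fusion ring R_7, the ℤ-span S of b_0, b_2, b_4, b_6 is closed under multiplication (it is the fusion ring of the adjoint subcategory ad(A_7)). The ℤ-linear map that fixes b_0 and b_6 and exchanges b_2 and b_4 is a based automorphism of S, and it is the unique based automorphism of S other than the identity; in particular the group of based automorphisms of the fusion ring of ad(A_7) is cyclic of order 2. -/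
/-- The index `2i ∈ {0,2,4,6}` of an even basis vector of `R_7`. -/
abbrev evenIdx7 (i : Fin 4) : Fin 7 :=
  ⟨2 * i.val, by have := i.isLt; omega⟩

/-- The set of even-index basis vectors `{b_0, b_2, b_4, b_6}` of (a realization of)
the fusion ring `R_7`. -/
abbrev evenBasisSet7 {R : Type*} [CommRing R] (B : Module.Basis (Fin 7) ℤ R) : Set R :=
  Set.range fun i : Fin 4 => B (evenIdx7 i)

/-- The even basis vectors `b_0, b_2, b_4, b_6`, regarded as elements of the subring
(subalgebra) of `R_7` that they generate. -/
noncomputable def evenBasisGen7 {R : Type*} [CommRing R] (B : Module.Basis (Fin 7) ℤ R) (i : Fin 4) :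
    Algebra.adjoin ℤ (evenBasisSet7 B) :=
  ⟨B (evenIdx7 i), Algebra.subset_adjoin (Set.mem_range_self i)⟩

/-!
A based ring with basis `b` is determined by its structure constants `N i j k`
(`b i * b j = ∑ k, N i j k • b k`), so its based automorphisms are exactly the permutations `σ`
of the basis with `N (σ i) (σ j) (σ k) = N i j k`. The even part `b₀, b₂, b₄, b₆` of `R_7` is
closed under multiplication, with the structure constants of `R_7`, and contains `b₀ = 1`, so it
is the subring it generates. A based automorphism fixes `b₀`, hence also `b₆`, the only other
basis element whose square is `b₀` (`b₂² = b₄² = b₀ + b₂ + b₄`); of the two remaining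
permutations, the exchange of `b₂` and `b₄` does preserve the table (`b₂ b₆ = b₄`,
`b₂ b₄ = b₂ + b₄ + b₆`).
-/

open Module Submodule

section StructureConstants

variable {ι R A : Type*} [CommSemiring R] [Semiring A] [Algebra R A]

theorem Submodule.mul_mem_span_of_mul_mem {s : Set A}
    (hs : ∀ x ∈ s, ∀ y ∈ s, x * y ∈ span R s) {x y : A} (hx : x ∈ span R s)
    (hy : y ∈ span R s) : x * y ∈ span R s := by
  have hle : span R s * span R s ≤ span R s := by
    rw [span_mul_span]
    exact span_le.2 (Set.mul_subset_iff.2 hs)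
  exact hle (mul_mem_mul hx hy)

theorem Algebra.toSubmodule_adjoin_eq_span {s : Set A} (h1 : 1 ∈ span R s)
    (hs : ∀ x ∈ s, ∀ y ∈ s, x * y ∈ span R s) :
    Subalgebra.toSubmodule (Algebra.adjoin R s) = span R s :=
  Algebra.adjoin_eq_span_of_subset R <| Submonoid.closure_le
    (S := ((span R s).toSubalgebra h1 fun _ _ => mul_mem_span_of_mul_mem hs).toSubmonoid).2
    subset_span

noncomputable def Subalgebra.basisOfToSubmoduleEq {S : Subalgebra R A} {v : ι → A}
    (hv : LinearIndependent R v) (h : Subalgebra.toSubmodule S = span R (Set.range v)) :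
    Basis ι R S :=
  (Basis.span hv).map (LinearEquiv.ofEq _ _ h.symm)

theorem Subalgebra.coe_basisOfToSubmoduleEq {S : Subalgebra R A} {v : ι → A}
    (hv : LinearIndependent R v) (h : Subalgebra.toSubmodule S = span R (Set.range v)) (i : ι) :
    (Subalgebra.basisOfToSubmoduleEq hv h i : A) = v i :=
  Basis.coe_span_apply hv i

theorem Module.Basis.map_mul_of_map_mul_basis_s3 {B : Type*} [Semiring B] [Algebra R B]
    (b : Basis ι R A) (f : A →ₗ[R] B) (h : ∀ i j, f (b i * b j) = f (b i) * f (b j))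
    (x y : A) : f (x * y) = f x * f y := by
  have hext : (LinearMap.mul R A).compr₂ f = (LinearMap.mul R B).compl₁₂ f f :=
    LinearMap.ext_basis b b h
  exact LinearMap.congr_fun₂ hext x y

variable [Fintype ι] (b : Basis ι R A) {N : ι → ι → ι → R}
  (hN : ∀ i j, b i * b j = ∑ k, N i j k • b k)
include hN

theorem Module.Basis.equiv_map_mul (σ : Equiv.Perm ι)
    (hσ : ∀ i j k, N (σ i) (σ j) (σ k) = N i j k) (x y : A) :
    b.equiv b σ (x * y) = b.equiv b σ x * b.equiv b σ y :=
  b.map_mul_of_map_mul_basis_s3 (b.equiv b σ : A →ₗ[R] A) (fun i j => by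
    simp only [LinearEquiv.coe_coe, Basis.equiv_apply, hN, map_sum, map_smul]
    rw [← Equiv.sum_comp σ fun k => N (σ i) (σ j) k • b k]
    simp only [hσ]) x y

noncomputable def Module.Basis.permRingEquiv (σ : Equiv.Perm ι)
    (hσ : ∀ i j k, N (σ i) (σ j) (σ k) = N i j k) : A ≃+* A :=
  { b.equiv b σ with map_mul' := b.equiv_map_mul hN σ hσ }

theorem Module.Basis.permRingEquiv_apply (σ : Equiv.Perm ι)
    (hσ : ∀ i j k, N (σ i) (σ j) (σ k) = N i j k) (i : ι) :
    b.permRingEquiv hN σ hσ (b i) = b (σ i) :=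
  b.equiv_apply i b σ

theorem Module.Basis.structureConst_invariant_of_algHom (f : A →ₐ[R] A) (σ : Equiv.Perm ι)
    (hf : ∀ i, f (b i) = b (σ i)) (i j k : ι) : N (σ i) (σ j) (σ k) = N i j k := by
  classical
  have h : ∑ k, N (σ i) (σ j) (σ k) • b (σ k) = ∑ k, N i j k • b (σ k) := by
    rw [Equiv.sum_comp σ fun k => N (σ i) (σ j) k • b k, ← hN, ← hf, ← hf, ← map_mul, hN,
      map_sum]
    simp only [map_smul, hf]
  simpa [Finsupp.single_apply, σ.injective.eq_iff] using congrArg (fun x => b.repr x (σ k)) h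

end StructureConstants

theorem Module.Basis.ringEquiv_ext_s3 {ι A B : Type*} [Ring A] [Ring B] (b : Basis ι ℤ A)
    {f g : A ≃+* B} (h : ∀ i, f (b i) = g (b i)) : f = g :=
  RingEquiv.ext <| LinearMap.congr_fun
    (b.ext (f₁ := f.toAddMonoidHom.toIntLinearMap) (f₂ := g.toAddMonoidHom.toIntLinearMap) h)

/-- The fusion coefficient `N_{jk}^m ∈ {0, 1}` of `R_N`. -/
def fusionCoeffA (N j k m : ℕ) : ℤ :=
  if m % 2 = (j + k) % 2 ∧ j - k ≤ m ∧ k - j ≤ m ∧ m ≤ j + k ∧ m ≤ 2 * (N - 1) - (j + k)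
  then 1 else 0

def adA7Coeff (i j k : Fin 4) : ℤ := fusionCoeffA 7 (2 * i) (2 * j) (2 * k)

theorem adA7Coeff_swap_invariant (i j k : Fin 4) :
    adA7Coeff (Equiv.swap 1 2 i) (Equiv.swap 1 2 j) (Equiv.swap 1 2 k) = adA7Coeff i j k := by
  revert i j k
  decide

theorem eq_one_or_swap_of_adA7Coeff_invariant (σ : Equiv.Perm (Fin 4))
    (hσ : ∀ i j k, adA7Coeff (σ i) (σ j) (σ k) = adA7Coeff i j k) :
    σ = 1 ∨ σ = Equiv.swap 1 2 := by
  revert σ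
  decide

section AdA7

variable {R : Type*} [CommRing R] (B : Basis (Fin 7) ℤ R)

theorem linearIndependent_evenIdx7 : LinearIndependent ℤ fun i : Fin 4 => B (evenIdx7 i) :=
  B.linearIndependent.comp _ fun i j h => by
    rw [Fin.ext_iff] at h ⊢
    simp only at h
    omega

variable (hmul : ∀ j k : Fin 7, B j * B k =
      ∑ m ∈ Finset.univ.filter (fun m : Fin 7 =>
        m.val % 2 = (j.val + k.val) % 2 ∧
        j.val - k.val ≤ m.val ∧ k.val - j.val ≤ m.val ∧
        m.val ≤ j.val + k.val ∧ m.val ≤ 12 - (j.val + k.val)), B m)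
include hmul

theorem mul_evenIdx7 (i j : Fin 4) :
    B (evenIdx7 i) * B (evenIdx7 j) = ∑ k, adA7Coeff i j k • B (evenIdx7 k) := by
  rw [hmul, Finset.sum_filter, Fin.sum_univ_seven, Fin.sum_univ_four]
  fin_cases i <;> fin_cases j <;> simp [adA7Coeff, fusionCoeffA] <;> rfl

theorem evenBasisSet7_mul_mem_span :
    ∀ x ∈ evenBasisSet7 B, ∀ y ∈ evenBasisSet7 B, x * y ∈ span ℤ (evenBasisSet7 B) := by
  rintro _ ⟨i, rfl⟩ _ ⟨j, rfl⟩
  rw [mul_evenIdx7 B hmul]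
  exact sum_mem fun k _ => smul_mem _ _ (subset_span ⟨k, rfl⟩)

variable (hone : B 0 = 1)
include hone

theorem toSubmodule_adjoin_evenBasisSet7 :
    Subalgebra.toSubmodule (Algebra.adjoin ℤ (evenBasisSet7 B)) = span ℤ (evenBasisSet7 B) :=
  Algebra.toSubmodule_adjoin_eq_span (hone ▸ subset_span ⟨0, rfl⟩)
    (evenBasisSet7_mul_mem_span B hmul)

noncomputable def evenBasis7 : Basis (Fin 4) ℤ (Algebra.adjoin ℤ (evenBasisSet7 B)) :=
  Subalgebra.basisOfToSubmoduleEq (linearIndependent_evenIdx7 B)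
    (toSubmodule_adjoin_evenBasisSet7 B hmul hone)

theorem evenBasis7_apply (i : Fin 4) : evenBasis7 B hmul hone i = evenBasisGen7 B i :=
  Subtype.ext (Subalgebra.coe_basisOfToSubmoduleEq _ _ i)

theorem evenBasis7_mul (i j : Fin 4) :
    evenBasis7 B hmul hone i * evenBasis7 B hmul hone j =
      ∑ k, adA7Coeff i j k • evenBasis7 B hmul hone k := by
  simp only [evenBasis7_apply]
  apply Subtype.ext
  simp [evenBasisGen7, mul_evenIdx7 B hmul]

end AdA7

/-- In (a realization of) the fusion ring `R_7` of the `A_7` fusion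
categories, the `ℤ`-span `S` of `b_0, b_2, b_4, b_6` is closed under multiplication (it
is the fusion ring of `ad(A_7)`).  The `ℤ`-linear map fixing `b_0, b_6` and exchanging
`b_2, b_4` is a based ring automorphism of `S`, and it is the unique based automorphism
of `S` other than the identity; in particular the group of based automorphisms of the
fusion ring of `ad(A_7)` is cyclic of order `2`. -/
theorem adA7_fusion_ring_based_automorphism_group
    {R : Type*} [CommRing R] (B : Module.Basis (Fin 7) ℤ R)
    (hone : B 0 = 1)
    (hmul : ∀ j k : Fin 7, B j * B k =
      ∑ m ∈ Finset.univ.filter (fun m : Fin 7 =>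
        m.val % 2 = (j.val + k.val) % 2 ∧
        j.val - k.val ≤ m.val ∧ k.val - j.val ≤ m.val ∧
        m.val ≤ j.val + k.val ∧ m.val ≤ 12 - (j.val + k.val)), B m) :
    (∀ x ∈ Submodule.span ℤ (evenBasisSet7 B), ∀ y ∈ Submodule.span ℤ (evenBasisSet7 B),
        x * y ∈ Submodule.span ℤ (evenBasisSet7 B)) ∧
    (Subalgebra.toSubmodule (Algebra.adjoin ℤ (evenBasisSet7 B)) =
        Submodule.span ℤ (evenBasisSet7 B)) ∧
    ∃ τ : RingAut ↥(Algebra.adjoin ℤ (evenBasisSet7 B)),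
      τ (evenBasisGen7 B 0) = evenBasisGen7 B 0 ∧
      τ (evenBasisGen7 B 1) = evenBasisGen7 B 2 ∧
      τ (evenBasisGen7 B 2) = evenBasisGen7 B 1 ∧
      τ (evenBasisGen7 B 3) = evenBasisGen7 B 3 ∧
      τ ≠ RingEquiv.refl _ ∧
      (∀ f : RingAut ↥(Algebra.adjoin ℤ (evenBasisSet7 B)),
        (∃ π : Equiv.Perm (Fin 4), ∀ i : Fin 4,
          f (evenBasisGen7 B i) = evenBasisGen7 B (π i)) →
        f = RingEquiv.refl _ ∨ f = τ) := by
  set b := evenBasis7 B hmul hone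
  have hb : ∀ i, evenBasisGen7 B i = b i := fun i => (evenBasis7_apply B hmul hone i).symm
  have hN := evenBasis7_mul B hmul hone
  set τ := b.permRingEquiv hN (Equiv.swap 1 2) adA7Coeff_swap_invariant
  have hτ : ∀ i, τ (b i) = b (Equiv.swap 1 2 i) := b.permRingEquiv_apply hN _ _
  refine ⟨fun x hx y hy => mul_mem_span_of_mul_mem (evenBasisSet7_mul_mem_span B hmul) hx hy,
    toSubmodule_adjoin_evenBasisSet7 B hmul hone, τ, ?_, ?_, ?_, ?_, ?_, ?_⟩
  iterate 4 (simp only [hb, hτ]; exact congrArg b (by decide))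
  · intro h
    have h12 := (hτ 1).symm.trans (DFunLike.congr_fun h (b 1))
    exact absurd (b.injective h12) (by decide)
  · rintro f ⟨π, hπ⟩
    simp only [hb] at hπ
    rcases eq_one_or_swap_of_adA7Coeff_invariant π
      (b.structureConst_invariant_of_algHom hN f.toRingHom.toIntAlgHom π hπ) with rfl | rfl
    · exact Or.inl (b.ringEquiv_ext_s3 hπ)
    · exact Or.inr (b.ringEquiv_ext_s3 fun i => (hπ i).trans (hτ i).symm)
end
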